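/- arXiv:2010.05285 — 2 statements merged into one kernel-verified Lean document; each statement's English description precedes it below -/
import Mathlib

section
/- Let G be a finite abelian group, let S be a symmetric subset of G with 0 ∉ S, and let k be a positive integer such that ks ≠ kt for all distinct s,t ∈ S and 0 ∉ kS, where kS = {ks : s ∈ S}. If φ is an automorphism of the Cayley graph Cay(G;S) with φ(0) = 0, then φ maps the set kS onto itself, i.e., φ(kS) = kS. -/
/-- The Cayley graph of an abelian group `G` with connection set `S`.
When `S` is symmetric and `0 ∉ S`, distinct `g, h` are adjacent iff `g - h ∈ S`. -/
def cayleyGraph {G : Type*} [AddCommGroup G] (S : Set G) : SimpleGraph G where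
  Adj g h := g ≠ h ∧ g - h ∈ S ∧ h - g ∈ S
  symm := by constructor; rintro g h ⟨hne, h1, h2⟩; exact ⟨hne.symm, h2, h1⟩
  loopless := by constructor; rintro g ⟨hne, -, -⟩; exact hne rfl

/-- The canonical bipartite double cover of a simple graph. -/
def doubleCover {V : Type*} (X : SimpleGraph V) : SimpleGraph (V × ZMod 2) where
  Adj a b := X.Adj a.1 b.1 ∧ a.2 ≠ b.2
  symm := by constructor; rintro a b ⟨h1, h2⟩; exact ⟨h1.symm, h2.symm⟩
  loopless := by constructor; rintro a ⟨-, h2⟩; exact h2 rfl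

/-- The direct (tensor/categorical) product of simple graphs. -/
def directProd {V W : Type*} (X : SimpleGraph V) (Y : SimpleGraph W) :
    SimpleGraph (V × W) where
  Adj a b := X.Adj a.1 b.1 ∧ Y.Adj a.2 b.2
  symm := by constructor; rintro a b ⟨h1, h2⟩; exact ⟨h1.symm, h2.symm⟩
  loopless := by constructor; rintro a ⟨h1, -⟩; exact X.loopless.irrefl _ h1


/-!
The translation matrices `P t` of `G` commute, so in characteristic `p` the Frobenius identity
gives `(∑ t ∈ T, P t) ^ p = ∑ t ∈ T, P (p • t)`. When `t ↦ p • t` is injective on `T` this reads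
`A_T ^ p = A_{pT}` over `ZMod p`, where `A_T` is the 0/1 matrix of the relation `b - a ∈ T`.
Hence a permutation of `G` preserving `T`-differences, i.e. fixing `A_T` under conjugation,
also preserves `pT`-differences. An automorphism of `Cay(G;S)` preserves `S`-differences because
`S` is symmetric; factoring `k` into primes, it preserves `kS`-differences, and if it fixes `0`
it therefore maps `kS = {g | g - 0 ∈ kS}` onto itself.
-/

open Matrix

theorem sum_pow_char_of_commute {ι R : Type*} [Semiring R] (p : ℕ) [Fact p.Prime]
    [CharP R p] (s : Finset ι) (f : ι → R) (h : ∀ i ∈ s, ∀ j ∈ s, Commute (f i) (f j)) :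
    (∑ i ∈ s, f i) ^ p = ∑ i ∈ s, f i ^ p := by
  classical
  induction s using Finset.induction_on with
  | empty => simp [zero_pow (Fact.out : p.Prime).ne_zero]
  | insert a s ha ih =>
    have hcomm : Commute (f a) (∑ i ∈ s, f i) :=
      Commute.sum_right _ _ _ fun j hj => h a (by simp) j (by simp [hj])
    rw [Finset.sum_insert ha, Finset.sum_insert ha, add_pow_char_of_commute p hcomm,
      ih fun i hi j hj => h i (by simp [hi]) j (by simp [hj])]

theorem Matrix.submatrix_pow_of_submatrix_eq {n R : Type*} [Fintype n] [DecidableEq n]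
    [Semiring R] {M : Matrix n n R} {e : n ≃ n} (hM : M.submatrix e e = M) (k : ℕ) :
    (M ^ k).submatrix e e = M ^ k := by
  induction k with
  | zero => simp
  | succ k ih => rw [pow_succ, ← submatrix_mul_equiv _ _ _ e, ih, hM]

section Translations

variable {G : Type*} [AddCommGroup G] [DecidableEq G] (R : Type*)

def translationMatrix [Zero R] [One R] (t : G) : Matrix G G R :=
  (Equiv.addRight t).permMatrix R

theorem translationMatrix_apply [Zero R] [One R] (t a b : G) :
    translationMatrix R t a b = if b - a = t then 1 else 0 := by
  simp only [translationMatrix, PEquiv.toMatrix_apply, Equiv.toPEquiv_apply, Equiv.coe_addRight,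
    Option.mem_def, Option.some.injEq, sub_eq_iff_eq_add']
  exact if_congr eq_comm rfl rfl

variable [Fintype G] [Semiring R]

theorem translationMatrix_add (s t : G) :
    translationMatrix R (s + t) = translationMatrix R s * translationMatrix R t := by
  rw [translationMatrix, Equiv.addRight_add, permMatrix_mul, translationMatrix, translationMatrix]

theorem translationMatrix_pow (t : G) (n : ℕ) :
    translationMatrix R t ^ n = translationMatrix R (n • t) := by
  induction n with
  | zero => simp [translationMatrix]
  | succ n ih => rw [pow_succ, ih, ← translationMatrix_add, succ_nsmul]

theorem commute_translationMatrix (s t : G) :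
    Commute (translationMatrix R s) (translationMatrix R t) := by
  rw [Commute, SemiconjBy, ← translationMatrix_add, ← translationMatrix_add, add_comm]

end Translations

/-- `φ` is an automorphism of the Cayley digraph of `G` with connection set `T`. -/
def DiffPreserving {G : Type*} [AddCommGroup G] (T : Set G) (φ : G ≃ G) : Prop :=
  ∀ a b, φ b - φ a ∈ T ↔ b - a ∈ T

section DiffMatrix

variable {G : Type*} [AddCommGroup G] [DecidableEq G] (R : Type*) [Semiring R]

def diffMatrix (U : Finset G) : Matrix G G R :=
  ∑ t ∈ U, translationMatrix R t

theorem diffMatrix_apply (U : Finset G) (a b : G) :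
    diffMatrix R U a b = if b - a ∈ U then 1 else 0 := by
  simp [diffMatrix, Matrix.sum_apply, translationMatrix_apply]

theorem diffMatrix_pow_char [Fintype G] (p : ℕ) [Fact p.Prime] [CharP R p] {U : Finset G}
    (hU : Set.InjOn (p • ·) (U : Set G)) :
    diffMatrix R U ^ p = diffMatrix R (U.image (p • ·)) := by
  rw [diffMatrix, sum_pow_char_of_commute p _ _ fun s _ t _ =>
    commute_translationMatrix R s t, diffMatrix, Finset.sum_image hU]
  simp_rw [translationMatrix_pow]

theorem diffMatrix_submatrix_eq_iff [Nontrivial R] (U : Finset G) (φ : G ≃ G) :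
    (diffMatrix R U).submatrix φ φ = diffMatrix R U ↔ DiffPreserving (U : Set G) φ := by
  simp only [← Matrix.ext_iff, submatrix_apply, diffMatrix_apply, DiffPreserving, Finset.mem_coe]
  refine forall₂_congr fun a b => ?_
  split_ifs <;> simp_all

end DiffMatrix

namespace DiffPreserving

variable {G : Type*} [AddCommGroup G] {T : Set G} {φ : G ≃ G}

theorem image_prime_nsmul [Finite G] (hφ : DiffPreserving T φ) {p : ℕ} (hp : p.Prime)
    (hT : Set.InjOn (p • ·) T) : DiffPreserving ((p • ·) '' T) φ := by
  classical
  have := Fintype.ofFinite G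
  have := Fact.mk hp
  lift T to Finset G using T.toFinite
  rw [← Finset.coe_image, ← diffMatrix_submatrix_eq_iff (ZMod p), ← diffMatrix_pow_char _ p hT]
  exact submatrix_pow_of_submatrix_eq ((diffMatrix_submatrix_eq_iff _ _ _).2 hφ) p

theorem image_nsmul [Finite G] (hφ : DiffPreserving T φ) (k : ℕ) (hk : Set.InjOn (k • ·) T) :
    DiffPreserving ((k • ·) '' T) φ := by
  induction k using Nat.recOnMul generalizing T with
  | zero =>
    simp only [zero_smul]
    rcases T.eq_empty_or_nonempty with rfl | hT
    · simp [DiffPreserving]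
    · simp [DiffPreserving, hT.image_const, sub_eq_zero]
  | one => simpa using hφ
  | prime p hp => exact hφ.image_prime_nsmul hp hk
  | mul a b iha ihb =>
    have hcomp : (fun t : G => (a * b) • t) = (a • ·) ∘ (b • ·) := funext fun t => mul_smul a b t
    rw [hcomp] at hk ⊢
    rw [Set.image_comp]
    exact iha (ihb hφ hk.of_comp) hk.image_of_comp

end DiffPreserving

theorem cayleyGraph_adj_iff_of_symm {G : Type*} [AddCommGroup G] {S : Set G}
    (hS : ∀ s ∈ S, -s ∈ S) {a b : G} (hab : a ≠ b) : (cayleyGraph S).Adj a b ↔ a - b ∈ S :=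
  ⟨fun h => h.2.1, fun h => ⟨hab, h, neg_sub a b ▸ hS _ h⟩⟩

theorem diffPreserving_of_cayleyGraph_iso {G : Type*} [AddCommGroup G] {S : Set G}
    (hS : ∀ s ∈ S, -s ∈ S) (φ : cayleyGraph S ≃g cayleyGraph S) :
    DiffPreserving S φ.toEquiv := by
  intro a b
  rcases eq_or_ne b a with rfl | hba
  · simp
  · show φ b - φ a ∈ S ↔ b - a ∈ S
    rw [← cayleyGraph_adj_iff_of_symm hS hba,
      ← cayleyGraph_adj_iff_of_symm hS (φ.injective.ne hba)]
    exact φ.map_adj_iff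

theorem aut_fix_zero_maps_smul_set_general {G : Type*} [AddCommGroup G] [Fintype G]
    (S : Set G) (hSsym : ∀ s ∈ S, -s ∈ S)
    (k : ℕ)
    (hinj : ∀ s ∈ S, ∀ t ∈ S, s ≠ t → k • s ≠ k • t)
    (φ : cayleyGraph S ≃g cayleyGraph S) (hφ0 : φ 0 = 0) :
    (fun g => φ g) '' ((fun s => k • s) '' S) = (fun s => k • s) '' S := by
  set kS := (fun s => k • s) '' S
  have hkS : DiffPreserving kS φ.toEquiv :=
    (diffPreserving_of_cayleyGraph_iso hSsym φ).image_nsmul k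
      fun s hs t ht => not_imp_not.1 (hinj s hs t ht)
  have hpre : (fun g => φ g) ⁻¹' kS = kS := Set.ext fun g => by simpa [hφ0] using hkS 0 g
  calc (fun g => φ g) '' kS = (fun g => φ g) '' ((fun g => φ g) ⁻¹' kS) := by rw [hpre]
    _ = kS := Set.image_preimage_eq _ φ.surjective

/-- An automorphism of `Cay(G;S)` fixing the vertex `0` maps the set `kS`
onto itself. -/
theorem aut_fix_zero_maps_smul_set {G : Type*} [AddCommGroup G] [Fintype G]
    (S : Set G) (hSsym : ∀ s ∈ S, -s ∈ S) (hS0 : (0 : G) ∉ S)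
    (k : ℕ) (hk : 0 < k)
    (hinj : ∀ s ∈ S, ∀ t ∈ S, s ≠ t → k • s ≠ k • t)
    (h0 : (0 : G) ∉ (fun s => k • s) '' S)
    (φ : cayleyGraph S ≃g cayleyGraph S) (hφ0 : φ 0 = 0) :
    (fun g => φ g) '' ((fun s => k • s) '' S) = (fun s => k • s) '' S :=
  aut_fix_zero_maps_smul_set_general S hSsym k hinj φ hφ0
end

section
/- Let X be a finite simple graph with nonempty vertex set. If every automorphism of the canonical bipartite double cover BX lies in the image of the canonical embedding of Aut(X) × S₂ into Aut(BX) (i.e., X is stable), then X is connected and twin-free. -/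
/-!
If `X` is disconnected, swapping the two layers of `BX` over a single connected component is an
automorphism of `BX` that moves some vertices to the other layer and fixes the layer of others, so
it cannot act on the layers by a single permutation `σ`. If `v ≠ w` have the same neighbourhood,
the transposition of `(v, 0)` and `(w, 0)` is an automorphism of `BX`; a factorisation `α × σ`
would need `α v = w` on layer `0` but `α v = v` on layer `1`.
-/
namespace SimpleGraph

variable {V : Type*} (X : SimpleGraph V)

def IsStable : Prop :=
  ∀ φ : doubleCover X ≃g doubleCover X,
    ∃ (α : X ≃g X) (σ : Equiv.Perm (ZMod 2)), ∀ (v : V) (i : ZMod 2), φ (v, i) = (α v, σ i)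

def doubleCoverIsoOfLayers (e : ZMod 2 → Equiv.Perm V)
    (he : ∀ i j, i ≠ j → ∀ a b, X.Adj (e i a) (e j b) ↔ X.Adj a b) :
    doubleCover X ≃g doubleCover X where
  toEquiv := Equiv.prodCongrLeft e
  map_rel_iff' {a b} := by
    show X.Adj (e a.2 a.1) (e b.2 b.1) ∧ a.2 ≠ b.2 ↔ X.Adj a.1 b.1 ∧ a.2 ≠ b.2
    exact ⟨fun h => ⟨(he _ _ h.2 _ _).1 h.1, h.2⟩, fun h => ⟨(he _ _ h.2 _ _).2 h.1, h.2⟩⟩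

@[simp]
theorem doubleCoverIsoOfLayers_apply (e : ZMod 2 → Equiv.Perm V) (he) (v : V) (i : ZMod 2) :
    X.doubleCoverIsoOfLayers e he (v, i) = (e i v, i) :=
  rfl

def doubleCoverIsoOfComponents (τ : X.ConnectedComponent → Equiv.Perm (ZMod 2)) :
    doubleCover X ≃g doubleCover X where
  toEquiv := Equiv.prodCongrRight fun v => τ (X.connectedComponentMk v)
  map_rel_iff' {a b} := by
    show X.Adj a.1 b.1 ∧ τ (X.connectedComponentMk a.1) a.2 ≠ τ (X.connectedComponentMk b.1) b.2 ↔
      X.Adj a.1 b.1 ∧ a.2 ≠ b.2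
    refine and_congr_right fun hab => ?_
    rw [ConnectedComponent.connectedComponentMk_eq_of_adj hab]
    exact (τ _).injective.ne_iff

@[simp]
theorem doubleCoverIsoOfComponents_apply (τ : X.ConnectedComponent → Equiv.Perm (ZMod 2))
    (v : V) (i : ZMod 2) :
    X.doubleCoverIsoOfComponents τ (v, i) = (v, τ (X.connectedComponentMk v) i) :=
  rfl

variable {X}

theorem IsStable.snd_apply_eq (hX : X.IsStable) (φ : doubleCover X ≃g doubleCover X)
    (v w : V) (i : ZMod 2) : (φ (v, i)).2 = (φ (w, i)).2 := by
  obtain ⟨α, σ, hφ⟩ := hX φ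
  simp [hφ]

theorem IsStable.fst_apply_eq (hX : X.IsStable) (φ : doubleCover X ≃g doubleCover X)
    (v : V) (i j : ZMod 2) : (φ (v, i)).1 = (φ (v, j)).1 := by
  obtain ⟨α, σ, hφ⟩ := hX φ
  simp [hφ]

theorem IsStable.preconnected (hX : X.IsStable) : X.Preconnected := by
  classical
  intro v w
  by_contra hvw
  let τ : X.ConnectedComponent → Equiv.Perm (ZMod 2) := fun c =>
    if c = X.connectedComponentMk v then Equiv.swap 0 1 else 1
  have hlayer := hX.snd_apply_eq (X.doubleCoverIsoOfComponents τ) v w 0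
  simp [τ, reachable_comm, hvw] at hlayer

theorem adj_swap_apply_left_iff [DecidableEq V] {v w : V}
    (hvw : X.neighborSet v = X.neighborSet w) (a b : V) :
    X.Adj (Equiv.swap v w a) b ↔ X.Adj a b := by
  simp only [← mem_neighborSet]
  rcases eq_or_ne a v with rfl | hav
  · rw [Equiv.swap_apply_left, hvw]
  rcases eq_or_ne a w with rfl | haw
  · rw [Equiv.swap_apply_right, hvw]
  · rw [Equiv.swap_apply_of_ne_of_ne hav haw]

theorem IsStable.eq_of_neighborSet_eq (hX : X.IsStable) {v w : V}
    (hvw : X.neighborSet v = X.neighborSet w) : v = w := by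
  classical
  let e : ZMod 2 → Equiv.Perm V := fun i => if i = 0 then Equiv.swap v w else 1
  have he : ∀ i j, i ≠ j → ∀ a b, X.Adj (e i a) (e j b) ↔ X.Adj a b := by
    intro i j hij a b
    have h01 : ∀ k : ZMod 2, k = 0 ∨ k = 1 := by decide
    rcases h01 i with rfl | rfl <;> rcases h01 j with rfl | rfl
    · exact absurd rfl hij
    · simpa [e] using adj_swap_apply_left_iff hvw a b
    · simpa [e, X.adj_comm] using adj_swap_apply_left_iff hvw b a
    · exact absurd rfl hij
  have hfst := hX.fst_apply_eq (X.doubleCoverIsoOfLayers e he) v 1 0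
  simpa [e] using hfst

end SimpleGraph

theorem connected_and_twinFree_of_stable_general {V : Type*} [Nonempty V]
    (X : SimpleGraph V)
    (hstable : ∀ φ : doubleCover X ≃g doubleCover X,
      ∃ (α : X ≃g X) (σ : Equiv.Perm (ZMod 2)),
        ∀ (v : V) (i : ZMod 2), φ (v, i) = (α v, σ i)) :
    X.Connected ∧
      ∀ v w : V, X.neighborSet v = X.neighborSet w → v = w := by
  have hX : X.IsStable := hstable
  exact ⟨⟨hX.preconnected⟩, fun _ _ => hX.eq_of_neighborSet_eq⟩

/-- A stable graph (one whose canonical double cover has only the obvious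
automorphisms) is connected and twin-free. -/
theorem connected_and_twinFree_of_stable {V : Type*} [Fintype V] [Nonempty V]
    (X : SimpleGraph V)
    (hstable : ∀ φ : doubleCover X ≃g doubleCover X,
      ∃ (α : X ≃g X) (σ : Equiv.Perm (ZMod 2)),
        ∀ (v : V) (i : ZMod 2), φ (v, i) = (α v, σ i)) :
    X.Connected ∧
      ∀ v w : V, X.neighborSet v = X.neighborSet w → v = w :=
  connected_and_twinFree_of_stable_general X hstable
end
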